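/- arXiv:2110.15480 — 2 statements merged into one kernel-verified Lean document; each statement's English description precedes it below -/
import Mathlib

section
/- Let P : ℝ → ℝ be a penalty function satisfying: P(0) = 0, P is symmetric (P(−t) = P(t)), P is nondecreasing on [0, ∞), and t ↦ P(t)/t is nonincreasing on (0, ∞) with lim_{t→0⁺} P(t)/t = λ. Then P is λ-Lipschitz: |P(t₁) − P(t₂)| ≤ λ|t₁ − t₂| for all t₁, t₂ ∈ ℝ. -/
/-- A penalty function with `P 0 = 0`, symmetry, monotonicity on `[0,∞)`,
`P t / t` nonincreasing on `(0,∞)` and bounded by `λ` (with limit `λ` at `0⁺`),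
is `λ`-Lipschitz. -/
theorem penalty_lipschitz
    (P : ℝ → ℝ) (lam : ℝ) (hlam : 0 < lam)
    (h0 : P 0 = 0)
    (hsymm : ∀ t, P (-t) = P t)
    (hmono : ∀ s t : ℝ, 0 ≤ s → s ≤ t → P s ≤ P t)
    (hratio : ∀ s t : ℝ, 0 < s → s ≤ t → P t / t ≤ P s / s)
    (hlim : Filter.Tendsto (fun t => P t / t) (nhdsWithin 0 (Set.Ioi 0)) (nhds lam)) :
    ∀ t₁ t₂ : ℝ, |P t₁ - P t₂| ≤ lam * |t₁ - t₂| := by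
  -- P t / t ≤ lam for all t > 0
  have hle : ∀ t : ℝ, 0 < t → P t / t ≤ lam := by
    intro t ht
    refine ge_of_tendsto hlim ?_
    filter_upwards [Ioo_mem_nhdsGT_of_mem (Set.mem_Ico.mpr ⟨le_refl 0, ht⟩)] with s hs
    exact hratio s t hs.1 hs.2.le
  have hPt : ∀ t : ℝ, 0 < t → P t ≤ lam * t := by
    intro t ht
    have := hle t ht
    rw [div_le_iff₀ ht] at this
    linarith
  -- key inequality on [0,∞)
  have key : ∀ s t : ℝ, 0 ≤ s → s ≤ t → P t - P s ≤ lam * (t - s) := by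
    intro s t hs hst
    rcases hs.eq_or_lt with rfl | hs
    · rcases hst.eq_or_lt with rfl | ht
      · simp
      · have := hPt t ht
        rw [h0]; linarith
    · have h1 : P t / t ≤ P s / s := hratio s t hs hst
      have h2 : P s / s ≤ lam := hle s hs
      have ht : 0 < t := lt_of_lt_of_le hs hst
      have h3 : P t ≤ (P s / s) * t := by
        rw [div_le_iff₀ ht] at h1
        exact h1
      have h4 : P s = (P s / s) * s := by field_simp
      have h5 : P t - P s ≤ (P s / s) * (t - s) := by
        calc P t - P s ≤ (P s / s) * t - (P s / s) * s := by rw [← h4]; linarith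
        _ = (P s / s) * (t - s) := by ring
      refine h5.trans ?_
      apply mul_le_mul_of_nonneg_right h2 (by linarith)
  -- P of |t| equals P t
  have habs : ∀ t : ℝ, P |t| = P t := by
    intro t
    rcases le_or_gt 0 t with h | h
    · rw [abs_of_nonneg h]
    · rw [abs_of_neg h, hsymm]
  -- main
  have main : ∀ a b : ℝ, 0 ≤ b → b ≤ a → |P a - P b| ≤ lam * (a - b) := by
    intro a b hb hba
    rw [abs_of_nonneg (by linarith [hmono b a hb hba])]
    exact key b a hb hba
  intro t₁ t₂
  rw [← habs t₁, ← habs t₂]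
  have htri : |(|t₁| - |t₂|)| ≤ |t₁ - t₂| := abs_abs_sub_abs_le_abs_sub t₁ t₂
  rcases le_total |t₂| |t₁| with h | h
  · have h1 := main |t₁| |t₂| (abs_nonneg _) h
    have h2 : |P (|t₁|) - P (|t₂|)| ≤ lam * |(|t₁| - |t₂|)| := by
      rw [abs_of_nonneg (by linarith : (0:ℝ) ≤ |t₁| - |t₂|)]; exact h1
    exact h2.trans (mul_le_mul_of_nonneg_left htri hlam.le)
  · have h1 := main |t₂| |t₁| (abs_nonneg _) h
    have h2 : |P (|t₁|) - P (|t₂|)| ≤ lam * |(|t₁| - |t₂|)| := by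
      rw [abs_sub_comm, abs_sub_comm (|t₁|) (|t₂|)]
      rw [abs_of_nonneg (by linarith : (0:ℝ) ≤ |t₂| - |t₁|)]; exact h1
    exact h2.trans (mul_le_mul_of_nonneg_left htri hlam.le)
end

section
/- Let P : ℝ → ℝ be a penalty function with P(0) = 0, P symmetric, and such that P(t) + (γ/2)t² is convex for some γ > 0, with P(t)/t nonincreasing on (0,∞) and lim_{t→0⁺} P(t)/t = λ. Then for every w ∈ ℝ, λ|w| ≤ P(w) + (γ/2)w². -/
/-- If `P 0 = 0`, `P` is symmetric, `P t + (γ/2) t²` is convex,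
`P t / t` is nonincreasing on `(0,∞)` with limit `λ` at `0⁺`, then
`λ |w| ≤ P w + (γ/2) w²` for all `w`. -/
theorem penalty_lower_bound
    (P : ℝ → ℝ) (lam gam : ℝ) (hlam : 0 < lam) (hgam : 0 < gam)
    (h0 : P 0 = 0)
    (hsymm : ∀ t, P (-t) = P t)
    (hconv : ConvexOn ℝ Set.univ (fun t => P t + gam / 2 * t ^ 2))
    (hratio : ∀ s t : ℝ, 0 < s → s ≤ t → P t / t ≤ P s / s)
    (hlim : Filter.Tendsto (fun t => P t / t) (nhdsWithin 0 (Set.Ioi 0)) (nhds lam)) :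
    ∀ w : ℝ, lam * |w| ≤ P w + gam / 2 * w ^ 2 := by
  set Q : ℝ → ℝ := fun t => P t + gam / 2 * t ^ 2 with hQ
  have hQ0 : Q 0 = 0 := by simp [hQ, h0]
  -- key inequality for positive arguments
  have key : ∀ w : ℝ, 0 < w → lam * w ≤ Q w := by
    intro w hw
    -- slope from 0 is monotone
    have slope_mono : ∀ t : ℝ, 0 < t → t ≤ w → Q t / t ≤ Q w / w := by
      intro t ht htw
      have := hconv.secant_mono (a := 0) (x := t) (y := w)
        (Set.mem_univ _) (Set.mem_univ _) (Set.mem_univ _) (ne_of_gt ht)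
        (ne_of_gt hw) htw
      simpa [hQ, h0] using this
    -- Q t / t tends to lam at 0⁺
    have hQlim : Filter.Tendsto (fun t => Q t / t) (nhdsWithin 0 (Set.Ioi 0))
        (nhds lam) := by
      have h1 : Filter.Tendsto (fun t : ℝ => gam / 2 * t) (nhdsWithin 0 (Set.Ioi 0))
          (nhds 0) := by
        have : Filter.Tendsto (fun t : ℝ => gam / 2 * t) (nhds 0) (nhds (gam / 2 * 0)) :=
          (continuous_const.mul continuous_id).tendsto 0
        simpa using this.mono_left nhdsWithin_le_nhds
      have h2 := hlim.add h1
      rw [add_zero] at h2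
      refine h2.congr' ?_
      filter_upwards [self_mem_nhdsWithin] with t ht
      have ht' : t ≠ 0 := ne_of_gt ht
      field_simp [hQ]
      ring
    have hle : lam ≤ Q w / w := by
      refine le_of_tendsto hQlim ?_
      filter_upwards [self_mem_nhdsWithin,
        Ioo_mem_nhdsGT_of_mem (Set.mem_Ico.mpr ⟨le_refl 0, hw⟩)] with t ht ht2
      exact slope_mono t ht (le_of_lt ht2.2)
    calc lam * w ≤ Q w / w * w := by nlinarith
      _ = Q w := by field_simp
  intro w
  rcases lt_trichotomy w 0 with hw | hw | hw
  · rw [abs_of_neg hw]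
    have h1 := key (-w) (by linarith : (0:ℝ) < -w)
    have h2 : Q (-w) = Q w := by simp [hQ, hsymm w]
    rw [h2] at h1
    simpa [hQ] using h1
  · simp [hw, h0]
  · rw [abs_of_pos hw]; exact key w hw
end
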